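/- For every real number a, the integral ∫₀^∞ x³ · erf(a x / √2) · exp(-x²/2) dx equals a (2a² + 3) / (a² + 1)^{3/2}. -/

import Mathlib

/-!
Differentiate in `a` under the integral sign. The `a`-derivative of the integrand is
`√(2/π) x⁴ exp(-(a² + 1) x² / 2)`, a Gaussian moment with integral `3 (a² + 1)^(-5/2)`,
which is also the derivative of the right-hand side; both sides vanish at `a = 0`.
-/

open Real MeasureTheory Set

noncomputable def erf (z : ℝ) : ℝ := 2 / Real.sqrt π * ∫ u in (0:ℝ)..z, Real.exp (-u ^ 2)

theorem hasDerivAt_erf (z : ℝ) : HasDerivAt erf (2 / √π * exp (-z ^ 2)) z := by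
  have hc : Continuous fun u : ℝ => exp (-u ^ 2) := by fun_prop
  exact (intervalIntegral.integral_hasDerivAt_right (hc.intervalIntegrable _ _)
    (hc.stronglyMeasurableAtFilter _ _) hc.continuousAt).const_mul _

theorem continuous_erf : Continuous erf :=
  continuous_iff_continuousAt.2 fun z => (hasDerivAt_erf z).continuousAt

@[simp]
theorem erf_zero : erf 0 = 0 := by simp [erf]

theorem abs_erf_le (z : ℝ) : |erf z| ≤ 2 / √π * |z| := by
  have h : ‖∫ u in (0:ℝ)..z, exp (-u ^ 2)‖ ≤ 1 * |z - 0| :=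
    intervalIntegral.norm_integral_le_of_norm_le_const fun u _ => by
      simpa [abs_of_pos (exp_pos _)] using sq_nonneg u
  rw [erf, abs_mul, abs_of_nonneg (by positivity)]
  simp only [Real.norm_eq_abs, one_mul, sub_zero] at h
  gcongr

theorem integrableOn_Ioi_pow_mul_exp_neg_mul_sq (n : ℕ) {b : ℝ} (hb : 0 < b) :
    IntegrableOn (fun x : ℝ => x ^ n * exp (-b * x ^ 2)) (Ioi 0) := by
  simpa using integrableOn_rpow_mul_exp_neg_mul_sq hb (neg_one_lt_zero.trans_le n.cast_nonneg)

theorem integral_Ioi_pow_four_mul_exp_neg_mul_sq {b : ℝ} (hb : 0 < b) :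
    ∫ x in Ioi (0:ℝ), x ^ 4 * exp (-b * x ^ 2) = 3 * √π / 8 * b ^ (-(5 / 2 : ℝ)) := by
  have h := integral_rpow_mul_exp_neg_mul_rpow two_pos (by norm_num : (-1 : ℝ) < 4) hb
  have hΓ : Gamma ((4 + 1) / 2) = 3 * √π / 4 := by
    rw [show ((4 : ℝ) + 1) / 2 = (2 : ℕ) + 1 / 2 by norm_num, Real.Gamma_nat_add_half]
    norm_num [Nat.doubleFactorial]
  simp only [← Real.rpow_natCast, Nat.cast_ofNat]
  rw [h, hΓ]
  norm_num
  ring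

noncomputable def erfIntegrand (a x : ℝ) : ℝ := x ^ 3 * erf (a * x / √2) * exp (-x ^ 2 / 2)

theorem two_div_sqrt_pi_mul_div_sqrt_two (y : ℝ) : 2 / √π * (y / √2) = √(2 / π) * y := by
  rw [Real.sqrt_div' _ pi_pos.le]
  field_simp
  rw [Real.sq_sqrt zero_le_two, mul_comm]

theorem hasDerivAt_erfIntegrand (a x : ℝ) :
    HasDerivAt (erfIntegrand · x)
      (√(2 / π) * (x ^ 4 * exp (-((a ^ 2 + 1) / 2) * x ^ 2))) a := by
  have h := (((hasDerivAt_erf _).comp a ((hasDerivAt_mul_const x).div_const √2)).const_mul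
    (x ^ 3)).mul_const (exp (-x ^ 2 / 2))
  refine h.congr_deriv ?_
  have hexp : exp (-(a * x / √2) ^ 2) * exp (-x ^ 2 / 2) = exp (-((a ^ 2 + 1) / 2) * x ^ 2) := by
    rw [← exp_add, div_pow, mul_pow, Real.sq_sqrt zero_le_two]
    ring_nf
  rw [← hexp]
  linear_combination (x ^ 3 * exp (-(a * x / √2) ^ 2) * exp (-x ^ 2 / 2)) *
    two_div_sqrt_pi_mul_div_sqrt_two x

theorem abs_erfIntegrand_le (a : ℝ) {x : ℝ} (hx : 0 ≤ x) :
    |erfIntegrand a x| ≤ √(2 / π) * |a| * (x ^ 4 * exp (-(1 / 2) * x ^ 2)) := by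
  have herf := abs_erf_le (a * x / √2)
  rw [abs_div, abs_mul, abs_of_nonneg hx, abs_of_pos (sqrt_pos.2 two_pos)] at herf
  calc |erfIntegrand a x| = x ^ 3 * |erf (a * x / √2)| * exp (-x ^ 2 / 2) := by
        rw [erfIntegrand, abs_mul, abs_mul, abs_of_nonneg (by positivity), abs_of_pos (exp_pos _)]
    _ ≤ x ^ 3 * (2 / √π * (|a| * x / √2)) * exp (-x ^ 2 / 2) := by gcongr
    _ = √(2 / π) * |a| * (x ^ 4 * exp (-(1 / 2) * x ^ 2)) := by
        rw [show -(1 / 2) * x ^ 2 = -x ^ 2 / 2 by ring]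
        linear_combination
          (x ^ 3 * exp (-x ^ 2 / 2)) * two_div_sqrt_pi_mul_div_sqrt_two (|a| * x)

theorem continuous_erfIntegrand (a : ℝ) : Continuous (erfIntegrand a) := by
  unfold erfIntegrand
  have := continuous_erf
  fun_prop

theorem integrableOn_erfIntegrand (a : ℝ) : IntegrableOn (erfIntegrand a) (Ioi 0) := by
  refine Integrable.mono'
    ((integrableOn_Ioi_pow_mul_exp_neg_mul_sq 4 one_half_pos).const_mul (√(2 / π) * |a|))
    (continuous_erfIntegrand a).aestronglyMeasurable ?_
  filter_upwards [ae_restrict_mem measurableSet_Ioi] with x hx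
  exact abs_erfIntegrand_le a hx.le

theorem hasDerivAt_integral_erfIntegrand (a : ℝ) :
    HasDerivAt (fun a => ∫ x in Ioi 0, erfIntegrand a x)
      (3 * (a ^ 2 + 1) ^ (-(5 / 2 : ℝ))) a := by
  have hbound (x b : ℝ) : ‖√(2 / π) * (x ^ 4 * exp (-((b ^ 2 + 1) / 2) * x ^ 2))‖ ≤
      √(2 / π) * (x ^ 4 * exp (-(1 / 2) * x ^ 2)) := by
    rw [Real.norm_of_nonneg (by positivity)]
    gcongr
    exact le_add_of_nonneg_left (sq_nonneg b)
  have hmoment : ∫ x in Ioi 0, √(2 / π) * (x ^ 4 * exp (-((a ^ 2 + 1) / 2) * x ^ 2)) =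
      3 * (a ^ 2 + 1) ^ (-(5 / 2 : ℝ)) := by
    have h2 : (2 : ℝ) ^ (-(5 / 2 : ℝ)) = √2 / 8 := by
      rw [show -(5 / 2 : ℝ) = 1 / 2 - 3 by norm_num, Real.rpow_sub two_pos, ← Real.sqrt_eq_rpow]
      norm_num
    rw [integral_const_mul, integral_Ioi_pow_four_mul_exp_neg_mul_sq (by positivity),
      Real.div_rpow (by positivity) zero_le_two, h2, Real.sqrt_div' _ pi_pos.le]
    field_simp
  have hdom := (integrableOn_Ioi_pow_mul_exp_neg_mul_sq 4 one_half_pos).const_mul √(2 / π)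
  exact hmoment ▸ (hasDerivAt_integral_of_dominated_loc_of_deriv_le
    (μ := volume.restrict (Ioi 0)) Filter.univ_mem
    (.of_forall fun b => (continuous_erfIntegrand b).aestronglyMeasurable)
    (integrableOn_erfIntegrand a) (by fun_prop) (.of_forall fun x b _ => hbound x b) hdom
    (.of_forall fun x b _ => hasDerivAt_erfIntegrand b x)).2

theorem hasDerivAt_closedForm (a : ℝ) :
    HasDerivAt (fun a : ℝ => a * (2 * a ^ 2 + 3) / (a ^ 2 + 1) ^ (3 / 2 : ℝ))
      (3 * (a ^ 2 + 1) ^ (-(5 / 2 : ℝ))) a := by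
  have ht : 0 < a ^ 2 + 1 := by positivity
  have h := (((hasDerivAt_id a).mul (((hasDerivAt_pow 2 a).const_mul 2).add_const 3))).mul
    (((hasDerivAt_pow 2 a).add_const 1).rpow_const (p := -(3 / 2)) (Or.inl ht.ne'))
  have hfun : (fun a : ℝ => a * (2 * a ^ 2 + 3) / (a ^ 2 + 1) ^ (3 / 2 : ℝ)) =
      fun a => a * (2 * a ^ 2 + 3) * (a ^ 2 + 1) ^ (-(3 / 2 : ℝ)) := by
    ext b
    rw [Real.rpow_neg (by positivity), div_eq_mul_inv]
  rw [hfun]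
  refine h.congr_deriv ?_
  rw [show -(3 / 2 : ℝ) - 1 = -(5 / 2) by norm_num,
    show -(3 / 2 : ℝ) = -(5 / 2) + 1 by norm_num, Real.rpow_add_one ht.ne']
  simp only [id_eq, Pi.mul_apply]
  ring

theorem stmt6 (a : ℝ) :
    ∫ x in Ioi (0 : ℝ), x ^ 3 * erf (a * x / Real.sqrt 2) * Real.exp (-x ^ 2 / 2) =
      a * (2 * a ^ 2 + 3) / (a ^ 2 + 1) ^ ((3 : ℝ) / 2) := by
  have hF := hasDerivAt_integral_erfIntegrand
  have hR := hasDerivAt_closedForm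
  refine congrFun (eq_of_fderiv_eq (fun b => (hF b).differentiableAt)
    (fun b => (hR b).differentiableAt) (fun b => (hF b).hasFDerivAt.fderiv.trans
    (hR b).hasFDerivAt.fderiv.symm) 0 ?_) a
  simp [erfIntegrand]
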